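/- The group with presentation on four generators a₁, b₁, a₂, b₂ with the nine relators a₁b₂, b₁b₂b₁⁻¹a₁⁻¹, [a₁,b₁], b₁b₂a₂a₂, b₁b₂a₂b₂⁻¹a₁⁻¹a₂a₁, a₁⁻¹a₂⁻¹a₁b₂a₂b₂⁻¹, b₂b₁a₁b₁, b₂b₁a₁a₂⁻¹a₁b₁a₂, and b₂b₁a₁a₂⁻¹b₁⁻¹a₁⁻¹a₂b₂⁻¹ is isomorphic to the cyclic group ℤ/4ℤ. -/

import Mathlib

/-!
Four of the relators already collapse the group. The relator a₁b₂ gives b₂ = a₁⁻¹; inserting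
b₁b₂a₂a₂ into b₁b₂a₂b₂⁻¹a₁⁻¹a₂a₁ leaves a₁ = 1, so b₂ = 1 and b₁ = a₂⁻², and then
b₂b₁a₁a₂⁻¹a₁b₁a₂ becomes a₂⁻⁴. Hence the group is cyclic, generated by a₂, of order dividing 4.
The order is exactly 4 because a₂ ↦ 1, b₁ ↦ 2, a₁, b₂ ↦ 0 kills all nine relators and so
defines a homomorphism onto ℤ/4ℤ.
-/

namespace Stmt3

def a₁ : FreeGroup (Fin 4) := FreeGroup.of 0
def b₁ : FreeGroup (Fin 4) := FreeGroup.of 1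
def a₂ : FreeGroup (Fin 4) := FreeGroup.of 2
def b₂ : FreeGroup (Fin 4) := FreeGroup.of 3

def rels : Set (FreeGroup (Fin 4)) :=
  { a₁ * b₂,
    b₁ * b₂ * b₁⁻¹ * a₁⁻¹,
    a₁ * b₁ * a₁⁻¹ * b₁⁻¹,
    b₁ * b₂ * a₂ * a₂,
    b₁ * b₂ * a₂ * b₂⁻¹ * a₁⁻¹ * a₂ * a₁,
    a₁⁻¹ * a₂⁻¹ * a₁ * b₂ * a₂ * b₂⁻¹,
    b₂ * b₁ * a₁ * b₁,
    b₂ * b₁ * a₁ * a₂⁻¹ * a₁ * b₁ * a₂,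
    b₂ * b₁ * a₁ * a₂⁻¹ * b₁⁻¹ * a₁⁻¹ * a₂ * b₂⁻¹ }

end Stmt3

open Subgroup

section

variable {G : Type*} [Group G]

theorem orderOf_eq_of_pow_eq_one_of_orderOf_map {H : Type*} [Monoid H] {g : G} {n : ℕ}
    (hg : g ^ n = 1) (φ : G →* H) (hφ : orderOf (φ g) = n) : orderOf g = n :=
  Nat.dvd_antisymm (orderOf_dvd_of_pow_eq_one hg) (hφ ▸ orderOf_map_dvd φ g)

theorem eq_one_and_pow_four_eq_one_of_relators {a₁ b₁ a₂ b₂ : G} (h₁ : a₁ * b₂ = 1)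
    (h₄ : b₁ * b₂ * a₂ * a₂ = 1) (h₅ : b₁ * b₂ * a₂ * b₂⁻¹ * a₁⁻¹ * a₂ * a₁ = 1)
    (h₈ : b₂ * b₁ * a₁ * a₂⁻¹ * a₁ * b₁ * a₂ = 1) :
    a₁ = 1 ∧ b₂ = 1 ∧ b₁ = (a₂ ^ 2)⁻¹ ∧ a₂ ^ 4 = 1 := by
  obtain rfl : b₂ = a₁⁻¹ := eq_inv_of_mul_eq_one_right h₁
  obtain rfl : a₁ = 1 := calc
    a₁ = b₁ * a₁⁻¹ * a₂ * a₂ * a₁ := by rw [h₄, one_mul]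
    _ = b₁ * a₁⁻¹ * a₂ * a₁⁻¹⁻¹ * a₁⁻¹ * a₂ * a₁ := by group
    _ = 1 := h₅
  obtain rfl : b₁ = (a₂ ^ 2)⁻¹ :=
    eq_inv_of_mul_eq_one_left (by simpa only [inv_one, mul_one, mul_assoc, pow_two] using h₄)
  refine ⟨rfl, inv_one, rfl, ?_⟩
  group at h₈
  simpa using h₈

end

namespace Stmt3

def toZMod4Gen : Fin 4 → Multiplicative (ZMod 4) :=
  ![.ofAdd 0, .ofAdd 2, .ofAdd 1, .ofAdd 0]

theorem lift_toZMod4Gen_eq_one_of_mem_rels : ∀ r ∈ rels, FreeGroup.lift toZMod4Gen r = 1 := by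
  simp only [rels, Set.mem_insert_iff, Set.mem_singleton_iff]
  rintro r (rfl | rfl | rfl | rfl | rfl | rfl | rfl | rfl | rfl) <;> decide

theorem pi1_X_eta :
    Nonempty (PresentedGroup rels ≃* Multiplicative (ZMod 4)) := by
  obtain ⟨ha₁, hb₂, hb₁, hpow⟩ := eq_one_and_pow_four_eq_one_of_relators
    (a₁ := PresentedGroup.of (rels := rels) 0) (b₁ := PresentedGroup.of 1)
    (a₂ := PresentedGroup.of 2) (b₂ := PresentedGroup.of 3)
    (PresentedGroup.one_of_mem (by simp [rels] : a₁ * b₂ ∈ rels))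
    (PresentedGroup.one_of_mem (by simp [rels] : b₁ * b₂ * a₂ * a₂ ∈ rels))
    (PresentedGroup.one_of_mem (by simp [rels] : b₁ * b₂ * a₂ * b₂⁻¹ * a₁⁻¹ * a₂ * a₁ ∈ rels))
    (PresentedGroup.one_of_mem (by simp [rels] : b₂ * b₁ * a₁ * a₂⁻¹ * a₁ * b₁ * a₂ ∈ rels))
  have hgen (x : PresentedGroup rels) : x ∈ zpowers (PresentedGroup.of 2) := by
    refine PresentedGroup.generated_by rels _ (fun i => ?_) x
    fin_cases i
    · exact ha₁ ▸ one_mem _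
    · exact hb₁ ▸ inv_mem (pow_mem (mem_zpowers _) 2)
    · exact mem_zpowers _
    · exact hb₂ ▸ one_mem _
  have hcard : Nat.card (PresentedGroup rels) = 4 := by
    rw [← orderOf_eq_card_of_forall_mem_zpowers hgen]
    refine orderOf_eq_of_pow_eq_one_of_orderOf_map hpow
      (PresentedGroup.toGroup lift_toZMod4Gen_eq_one_of_mem_rels) ?_
    simp [toZMod4Gen]
  exact ⟨(zmodMulEquivOfGenerator hgen hcard).symm⟩

end Stmt3
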